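/- Let d ≥ 2, y₁, …, yₙ ∈ ℝ^d mutually distinct, c₁, …, cₙ ∈ ℂ, and let Θ ⊆ S^{d-1} be a nonempty open subset of the unit sphere. If u(θ) = Σⱼ cⱼ·exp(i·yⱼ·θ) vanishes for all θ ∈ Θ, then u vanishes on all of S^{d-1}, and hence all cⱼ = 0. -/

import Mathlib

open scoped RealInnerProductSpace
open Filter Topology Finset Module Metric Complex

/-!
Restricted to a great circle `t ↦ cos t • v + sin t • w`, the exponential sum extends to the
entire function `ζ ↦ ∑ⱼ cⱼ exp (i (⟪yⱼ, v⟫ cos ζ + ⟪yⱼ, w⟫ sin ζ))`, so vanishing on an arc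
forces vanishing on the whole circle; every point of the sphere lies on a great circle through a
point of `Θ`. For the coefficients, take `w` with the `⟪yⱼ, w⟫` distinct and `v ⊥ w`: at
`ζ = -i arsinh s` the terms become unimodular factors times `exp (⟪yⱼ, w⟫ s)`, and as `s → ∞`
the term with the largest exponent among the nonzero coefficients would dominate.
-/

lemma eq_zero_of_forall_sum_mul_exp_eq_zero {ι : Type*} [Fintype ι] {b : ι → ℝ}
    (hb : Function.Injective b) {c : ι → ℂ} {g : ι → ℝ → ℂ} (hg : ∀ j s, ‖g j s‖ = 1)
    (h : ∀ s : ℝ, ∑ j, c j * g j s * Real.exp (b j * s) = 0) : c = 0 := by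
  classical
  by_contra hc
  set S := univ.filter (c · ≠ 0)
  have hS : S.Nonempty := by
    obtain ⟨j, hj⟩ := Function.ne_iff.mp hc
    exact ⟨j, by simpa [S] using hj⟩
  obtain ⟨j₀, hj₀S, hmax⟩ := S.exists_max_image b hS
  have hnorm : ∀ j s, ‖c j * g j s * Real.exp (b j * s)‖ = ‖c j‖ * Real.exp (b j * s) := by
    intro j s
    rw [norm_mul, norm_mul, hg, mul_one, norm_real, Real.norm_of_nonneg (Real.exp_pos _).le]
  have hbound : ∀ s, ‖c j₀‖ ≤ ∑ j ∈ S.erase j₀, ‖c j‖ * Real.exp ((b j - b j₀) * s) := by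
    intro s
    have hsplit : c j₀ * g j₀ s * Real.exp (b j₀ * s)
        = -∑ j ∈ S.erase j₀, c j * g j s * Real.exp (b j * s) := by
      rw [eq_neg_iff_add_eq_zero, add_sum_erase S (fun j => c j * g j s * Real.exp (b j * s)) hj₀S,
        sum_filter_of_ne fun j _ hj => left_ne_zero_of_mul (left_ne_zero_of_mul hj), h s]
    refine le_of_mul_le_mul_right ?_ (Real.exp_pos (b j₀ * s))
    calc ‖c j₀‖ * Real.exp (b j₀ * s) = ‖c j₀ * g j₀ s * Real.exp (b j₀ * s)‖ :=
          (hnorm j₀ s).symm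
      _ ≤ ∑ j ∈ S.erase j₀, ‖c j * g j s * Real.exp (b j * s)‖ := by
          rw [hsplit, norm_neg]
          exact norm_sum_le _ _
      _ = (∑ j ∈ S.erase j₀, ‖c j‖ * Real.exp ((b j - b j₀) * s)) * Real.exp (b j₀ * s) := by
          rw [sum_mul]
          refine sum_congr rfl fun j _ => ?_
          rw [hnorm, mul_assoc, ← Real.exp_add, sub_mul, sub_add_cancel]
  have hlim : Tendsto (fun s => ∑ j ∈ S.erase j₀, ‖c j‖ * Real.exp ((b j - b j₀) * s))
      atTop (𝓝 0) := by
    rw [← sum_const_zero (s := S.erase j₀)]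
    refine tendsto_finsetSum _ fun j hj => ?_
    have hlt : b j - b j₀ < 0 := by
      obtain ⟨hne, hjS⟩ := mem_erase.mp hj
      exact sub_neg.mpr ((hmax j hjS).lt_of_ne (hb.ne hne))
    simpa using (Real.tendsto_exp_atBot.comp
      (tendsto_id.const_mul_atTop_of_neg hlt)).const_mul ‖c j‖
  exact (mem_filter.mp hj₀S).2 (norm_eq_zero.mp
    (le_antisymm (ge_of_tendsto' hlim hbound) (norm_nonneg _)))

lemma Differentiable.eq_zero_of_eventually_ofReal {f : ℂ → ℂ} (hf : Differentiable ℂ f)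
    (h : ∀ᶠ t : ℝ in 𝓝 0, f t = 0) : f = 0 := by
  have hmaps : Tendsto ((↑) : ℝ → ℂ) (𝓝[≠] 0) (𝓝[≠] 0) :=
    tendsto_nhdsWithin_of_tendsto_nhds_of_eventually_within _
      (by simpa using (continuous_ofReal.tendsto 0).mono_left nhdsWithin_le_nhds)
      (eventually_nhdsWithin_of_forall fun t ht => by simpa using ht)
  have hfreq : ∃ᶠ z in 𝓝[≠] (0 : ℂ), f z = 0 :=
    hmaps.frequently (h.filter_mono nhdsWithin_le_nhds).frequently
  have hA : AnalyticOnNhd ℂ f Set.univ := analyticOnNhd_univ_iff_differentiable.mpr hf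
  funext z
  exact hA.eqOn_zero_of_preconnected_of_frequently_eq_zero isPreconnected_univ
    (Set.mem_univ 0) hfreq (Set.mem_univ z)

section InnerProductSpace

variable {E : Type*} [NormedAddCommGroup E] [InnerProductSpace ℝ E] {ι : Type*} [Fintype ι]

lemma exists_norm_eq_one_inner_eq_zero [FiniteDimensional ℝ E] (hE : 2 ≤ finrank ℝ E) (v : E) :
    ∃ w : E, ‖w‖ = 1 ∧ ⟪v, w⟫ = 0 := by
  have hK : (ℝ ∙ v)ᗮ ≠ ⊥ := by
    rw [Ne, Submodule.orthogonal_eq_bot_iff]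
    intro htop
    have hle := finrank_span_le_card (R := ℝ) ({v} : Set E)
    rw [htop, finrank_top] at hle
    simp only [Set.toFinset_singleton, card_singleton] at hle
    omega
  obtain ⟨w, hw, hw0⟩ := Submodule.exists_mem_ne_zero_of_ne_bot hK
  refine ⟨‖w‖⁻¹ • w, norm_smul_inv_norm hw0, ?_⟩
  rw [real_inner_smul_right, Submodule.mem_orthogonal_singleton_iff_inner_right.mp hw, mul_zero]

lemma exists_norm_eq_one_injective_inner [Nontrivial E] {y : ι → E} (hy : Function.Injective y) :
    ∃ w : E, ‖w‖ = 1 ∧ Function.Injective fun j => ⟪y j, w⟫ := by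
  obtain ⟨e, he⟩ := exists_ne (0 : E)
  -- the extra functional `⟪e, ·⟫` only serves to make the separating vector nonzero
  let f : Option {p : ι × ι // p.1 ≠ p.2} → Dual ℝ E
    | none => innerₛₗ ℝ e
    | some p => innerₛₗ ℝ (y p.1.1 - y p.1.2)
  obtain ⟨x, hx⟩ := Dual.exists_forall_ne_zero_of_forall_exists f <| by
    rintro (_ | ⟨⟨i, j⟩, hij⟩)
    · exact ⟨e, by simpa [f] using he⟩
    · exact ⟨y i - y j, by simpa [f, ← inner_sub_left] using sub_ne_zero.mpr (hy.ne hij)⟩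
  have hx0 : x ≠ 0 := by
    rintro rfl
    exact hx none (by simp [f])
  refine ⟨‖x‖⁻¹ • x, norm_smul_inv_norm hx0, fun i j hij => by_contra fun hne => ?_⟩
  apply hx (some ⟨(i, j), hne⟩)
  simp only [real_inner_smul_right] at hij
  simp [f, mul_left_cancel₀ (inv_ne_zero (norm_ne_zero_iff.mpr hx0)) hij]

lemma norm_cos_smul_add_sin_smul {v w : E} (hv : ‖v‖ = 1) (hw : ‖w‖ = 1) (hvw : ⟪v, w⟫ = 0)
    (t : ℝ) : ‖Real.cos t • v + Real.sin t • w‖ = 1 := by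
  have hsq : ‖Real.cos t • v + Real.sin t • w‖ ^ 2 = 1 := by
    rw [sq, norm_add_sq_eq_norm_sq_add_norm_sq_real (by simp [real_inner_smul_left,
      real_inner_smul_right, hvw]), norm_smul, norm_smul, hv, hw]
    simp only [Real.norm_eq_abs, mul_one, ← sq, sq_abs, Real.cos_sq_add_sin_sq]
  exact (pow_eq_one_iff_of_nonneg (norm_nonneg _) two_ne_zero).mp hsq

lemma exists_eq_cos_smul_add_sin_smul [FiniteDimensional ℝ E] (hE : 2 ≤ finrank ℝ E)
    {θ₀ θ : E} (hθ₀ : ‖θ₀‖ = 1) (hθ : ‖θ‖ = 1) :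
    ∃ v : E, ‖v‖ = 1 ∧ ⟪θ₀, v⟫ = 0 ∧ ∃ t : ℝ, θ = Real.cos t • θ₀ + Real.sin t • v := by
  set a := ⟪θ₀, θ⟫
  set p := θ - a • θ₀
  obtain ⟨v, hv, hθ₀v, hθv⟩ : ∃ v : E, ‖v‖ = 1 ∧ ⟪θ₀, v⟫ = 0 ∧ θ = a • θ₀ + ‖p‖ • v := by
    by_cases hp : p = 0
    · obtain ⟨v, hv, hθ₀v⟩ := exists_norm_eq_one_inner_eq_zero hE θ₀
      exact ⟨v, hv, hθ₀v, by simpa [hp] using (sub_eq_zero.mp hp)⟩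
    · refine ⟨‖p‖⁻¹ • p, norm_smul_inv_norm hp, ?_, ?_⟩
      · rw [real_inner_smul_right, inner_sub_right, real_inner_smul_right,
          real_inner_self_eq_norm_sq, hθ₀, one_pow, mul_one, sub_self, mul_zero]
      · rw [smul_inv_smul₀ (norm_ne_zero_iff.mpr hp), add_sub_cancel]
  have hpyth : a ^ 2 + ‖p‖ ^ 2 = 1 := by
    have := norm_add_sq_eq_norm_sq_add_norm_sq_real (x := a • θ₀) (y := ‖p‖ • v)
      (by rw [real_inner_smul_left, real_inner_smul_right, hθ₀v, mul_zero, mul_zero])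
    rw [← hθv, hθ, norm_smul, norm_smul, hθ₀, hv] at this
    simpa [← sq] using this.symm
  have ha : |a| ≤ 1 := (sq_le_one_iff_abs_le_one a).mp (by nlinarith [sq_nonneg ‖p‖])
  refine ⟨v, hv, hθ₀v, Real.arccos a, ?_⟩
  rw [Real.cos_arccos (abs_le.mp ha).1 (abs_le.mp ha).2, Real.sin_arccos,
    ← hpyth, add_sub_cancel_left, Real.sqrt_sq (norm_nonneg p), ← hθv]

noncomputable def expSum (y : ι → E) (c : ι → ℂ) (x : E) : ℂ :=
  ∑ j, c j * exp (I * ⟪y j, x⟫)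

noncomputable def circleExpSum (y : ι → E) (c : ι → ℂ) (v w : E) (ζ : ℂ) : ℂ :=
  ∑ j, c j * exp (I * (⟪y j, v⟫ * cos ζ + ⟪y j, w⟫ * sin ζ))

lemma circleExpSum_ofReal (y : ι → E) (c : ι → ℂ) (v w : E) (t : ℝ) :
    circleExpSum y c v w t = expSum y c (Real.cos t • v + Real.sin t • w) := by
  simp only [circleExpSum, expSum, inner_add_right, real_inner_smul_right, ofReal_add,
    ofReal_mul, ofReal_cos, ofReal_sin, mul_comm (cos (t : ℂ)), mul_comm (sin (t : ℂ))]

lemma circleExpSum_eq_zero {y : ι → E} {c : ι → ℂ} {v w : E}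
    (h : ∀ᶠ t : ℝ in 𝓝 0, expSum y c (Real.cos t • v + Real.sin t • w) = 0) :
    circleExpSum y c v w = 0 :=
  Differentiable.eq_zero_of_eventually_ofReal (by unfold circleExpSum; fun_prop)
    (by simpa only [circleExpSum_ofReal] using h)

lemma expSum_eq_zero_of_norm_eq_one [FiniteDimensional ℝ E] (hE : 2 ≤ finrank ℝ E)
    {y : ι → E} {c : ι → ℂ} {V : Set E} (hV : IsOpen V) (hne : (V ∩ sphere 0 1).Nonempty)
    (h : ∀ θ ∈ V ∩ sphere 0 1, expSum y c θ = 0) {θ : E} (hθ : ‖θ‖ = 1) : expSum y c θ = 0 := by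
  obtain ⟨θ₀, hθ₀V, hθ₀⟩ := hne
  rw [mem_sphere_zero_iff_norm] at hθ₀
  obtain ⟨v, hv, hθ₀v, t, rfl⟩ := exists_eq_cos_smul_add_sin_smul hE hθ₀ hθ
  have harc : ∀ᶠ s : ℝ in 𝓝 0, expSum y c (Real.cos s • θ₀ + Real.sin s • v) = 0 := by
    have hcont : Continuous fun s : ℝ => Real.cos s • θ₀ + Real.sin s • v := by fun_prop
    filter_upwards [hcont.continuousAt.preimage_mem_nhds (hV.mem_nhds (by simpa using hθ₀V))]
      with s hs
    exact h _ ⟨hs, mem_sphere_zero_iff_norm.mpr (norm_cos_smul_add_sin_smul hθ₀ hv hθ₀v s)⟩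
  rw [← circleExpSum_ofReal, circleExpSum_eq_zero harc, Pi.zero_apply]

lemma eq_zero_of_expSum_eq_zero [FiniteDimensional ℝ E] (hE : 2 ≤ finrank ℝ E) {y : ι → E}
    (hy : Function.Injective y) {c : ι → ℂ} (h : ∀ θ : E, ‖θ‖ = 1 → expSum y c θ = 0) :
    c = 0 := by
  have : Nontrivial E := nontrivial_of_finrank_pos (R := ℝ) (by omega)
  obtain ⟨w, hw, hinj⟩ := exists_norm_eq_one_injective_inner hy
  obtain ⟨v, hv, hwv⟩ := exists_norm_eq_one_inner_eq_zero hE w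
  have hcirc : circleExpSum y c v w = 0 := circleExpSum_eq_zero <| .of_forall fun t =>
    h _ (norm_cos_smul_add_sin_smul hv hw (real_inner_comm v w ▸ hwv) t)
  refine eq_zero_of_forall_sum_mul_exp_eq_zero hinj
    (g := fun j s => exp ((⟪y j, v⟫ * Real.cosh (Real.arsinh s) : ℝ) * I))
    (fun j s => norm_exp_ofReal_mul_I _) fun s => ?_
  -- `cos (-(σ i)) = cosh σ` and `sin (-(σ i)) = -i sinh σ`, with `σ = arsinh s`
  refine (sum_congr rfl fun j _ => ?_).trans (congrFun hcirc (-(Real.arsinh s * I)))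
  rw [cos_neg, sin_neg, cos_mul_I, sin_mul_I, ← ofReal_cosh, ← ofReal_sinh, Real.sinh_arsinh,
    mul_assoc, ofReal_exp, ← exp_add]
  congr 2
  push_cast
  linear_combination (⟪y j, w⟫ * s : ℂ) * I_sq

end InnerProductSpace

/-- If `u(θ) = ∑ⱼ cⱼ exp(i yⱼ·θ)` (distinct `yⱼ`, `d ≥ 2`) vanishes on a nonempty
relatively open subset `Θ` of the unit sphere, then `u` vanishes on the whole sphere and
all `cⱼ = 0`. -/
theorem stmt13 (d n : ℕ) (hd : 2 ≤ d) (y : Fin n → EuclideanSpace ℝ (Fin d))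
    (hy : Function.Injective y) (c : Fin n → ℂ)
    (Θ : Set (EuclideanSpace ℝ (Fin d))) (hΘne : Θ.Nonempty)
    (hΘopen : ∃ V : Set (EuclideanSpace ℝ (Fin d)), IsOpen V ∧
      Θ = V ∩ Metric.sphere (0 : EuclideanSpace ℝ (Fin d)) 1)
    (h : ∀ θ ∈ Θ, ∑ j, c j * Complex.exp (Complex.I * (⟪y j, θ⟫ : ℝ)) = 0) :
    (∀ θ : EuclideanSpace ℝ (Fin d), ‖θ‖ = 1 →
      ∑ j, c j * Complex.exp (Complex.I * (⟪y j, θ⟫ : ℝ)) = 0) ∧ ∀ j, c j = 0 := by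
  obtain ⟨V, hV, rfl⟩ := hΘopen
  have hE : 2 ≤ finrank ℝ (EuclideanSpace ℝ (Fin d)) := by simpa using hd
  have hsphere : ∀ θ : EuclideanSpace ℝ (Fin d), ‖θ‖ = 1 → expSum y c θ = 0 :=
    fun θ => expSum_eq_zero_of_norm_eq_one hE hV hΘne h
  exact ⟨hsphere, congrFun (eq_zero_of_expSum_eq_zero hE hy hsphere)⟩
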